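/- arXiv:2003.07625 — 3 statements merged into one kernel-verified Lean document; each statement's English description precedes it below -/
import Mathlib

section
/- Let r₀ : [0,T] → ℝ be continuously differentiable, and suppose there exists t₀ ∈ (0,T] with |r₀(t₀)| > |r₀(0)|. Define Λ_λ(t₀) = ∫₀^{t₀} (sin(√λ (t₀ - s))/√λ) r₀(s) ds for λ > 0. Then there exist constants c₀ > 0 and λ₀ > 0 such that for all λ ≥ λ₀, |Λ_λ(t₀)| > c₀/λ. -/
/-!
Integrating by parts once,
`λ Λ_λ(t₀) = r₀(t₀) - r₀(0) cos(√λ t₀) - ∫₀^{t₀} r₀'(s) cos(√λ (t₀ - s)) ds`.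
The last integral tends to `0` by the Riemann–Lebesgue lemma, while the boundary terms have
modulus at least `|r₀(t₀)| - |r₀(0)| > 0`; half of that gap serves as `c₀`.
-/

open Real MeasureTheory Set Filter Topology Interval

theorem tendsto_intervalIntegral_cexp_smul_atTop {E : Type*} [NormedAddCommGroup E]
    [NormedSpace ℂ E] (g : ℝ → E) {a b : ℝ} (hab : a ≤ b) :
    Tendsto (fun ω : ℝ => ∫ s in a..b, Complex.exp (-(ω * s) * Complex.I) • g s) atTop (𝓝 0) := by
  -- the integral is the Fourier transform of `(Ioc a b).indicator g` at `ω / (2π)`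
  have hscale : Tendsto (fun ω : ℝ => ω / (2 * π)) atTop (cocompact ℝ) :=
    (tendsto_id.atTop_div_const (by positivity)).mono_right atTop_le_cocompact
  refine ((Real.zero_at_infty_fourier ((Ioc a b).indicator g)).comp hscale).congr fun ω => ?_
  rw [Function.comp_apply, Real.fourier_real_eq_integral_exp_smul,
    intervalIntegral.integral_of_le hab, ← integral_indicator measurableSet_Ioc]
  congr 1 with s
  by_cases hs : s ∈ Ioc a b
  · simp only [indicator_of_mem hs]
    congr 3
    push_cast
    field_simp
  · simp [indicator_of_notMem hs]

theorem intervalIntegral_mul_cos_eq_re {g : ℝ → ℝ} {a b : ℝ}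
    (hg : IntervalIntegrable g volume a b) (c ω : ℝ) :
    ∫ s in a..b, g s * cos (ω * (c - s)) =
      (Complex.exp (((ω * c : ℝ) : ℂ) * Complex.I) *
        ∫ s in a..b, Complex.exp (-(ω * s) * Complex.I) • (g s : ℂ)).re := by
  have hint : IntervalIntegrable (fun s => Complex.exp (((ω * c : ℝ) : ℂ) * Complex.I) *
      (Complex.exp (-(ω * s) * Complex.I) • (g s : ℂ))) volume a b := by
    simp_rw [smul_eq_mul, ← mul_assoc]
    exact IntervalIntegrable.continuousOn_mul ⟨hg.1.ofReal, hg.2.ofReal⟩ (by fun_prop)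
  rw [← intervalIntegral.integral_const_mul, ← Complex.reCLM_apply,
    ← Complex.reCLM.intervalIntegral_comp_comm hint]
  congr 1 with s
  have hphase : ((ω * c : ℝ) : ℂ) * Complex.I + -(ω * s) * Complex.I =
      ((ω * (c - s) : ℝ) : ℂ) * Complex.I := by
    push_cast
    ring
  rw [Complex.reCLM_apply, smul_eq_mul, ← mul_assoc, ← Complex.exp_add, hphase,
    Complex.re_mul_ofReal, Complex.exp_ofReal_mul_I_re, mul_comm]

theorem tendsto_intervalIntegral_mul_cos_atTop {g : ℝ → ℝ} {a b : ℝ} (hab : a ≤ b)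
    (hg : IntervalIntegrable g volume a b) (c : ℝ) :
    Tendsto (fun ω => ∫ s in a..b, g s * cos (ω * (c - s))) atTop (𝓝 0) := by
  have hRL := (tendsto_intervalIntegral_cexp_smul_atTop (fun s => (g s : ℂ)) hab).norm
  rw [norm_zero] at hRL
  refine squeeze_zero_norm (fun ω => ?_) hRL
  rw [intervalIntegral_mul_cos_eq_re hg, Real.norm_eq_abs]
  refine (Complex.abs_re_le_norm _).trans_eq ?_
  rw [norm_mul, Complex.norm_exp_ofReal_mul_I, one_mul]

theorem mul_intervalIntegral_sin_mul_eq {r r' : ℝ → ℝ} {a t : ℝ}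
    (hr : ∀ x ∈ [[a, t]], HasDerivWithinAt r (r' x) [[a, t]] x)
    (hr' : IntervalIntegrable r' volume a t) (ω : ℝ) :
    ω * ∫ s in a..t, sin (ω * (t - s)) * r s =
      r t - r a * cos (ω * (t - a)) - ∫ s in a..t, r' s * cos (ω * (t - s)) := by
  have hcos : ∀ x ∈ [[a, t]], HasDerivWithinAt (fun s => cos (ω * (t - s)))
      (ω * sin (ω * (t - x))) [[a, t]] x := fun x _ =>
    ((((hasDerivAt_id' x).const_sub t).const_mul ω).cos.congr_deriv (by ring)).hasDerivWithinAt
  have hparts := intervalIntegral.integral_mul_deriv_eq_deriv_mul_of_hasDerivWithinAt hr hcos hr'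
    ((by fun_prop : Continuous fun x => ω * sin (ω * (t - x))).intervalIntegrable _ _)
  simp only [sub_self, mul_zero, cos_zero, mul_one] at hparts
  rw [← hparts, ← intervalIntegral.integral_const_mul]
  congr 1 with s
  ring

theorem abs_sub_abs_sub_abs_le_abs_sub_mul_cos_sub (x y θ z : ℝ) :
    |x| - |y| - |z| ≤ |x - y * cos θ - z| := by
  have hcos : |y * cos θ| ≤ |y| := by
    rw [abs_mul]
    exact mul_le_of_le_one_right (abs_nonneg y) (abs_cos_le_one θ)
  have htri := abs_add_three (x - y * cos θ - z) (y * cos θ) z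
  rw [show x - y * cos θ - z + y * cos θ + z = x by ring] at htri
  linarith

theorem stmt_0_general (T : ℝ) (r₀ : ℝ → ℝ)
    (hr : ContDiffOn ℝ 1 r₀ (Icc 0 T))
    (t₀ : ℝ) (ht₀ : t₀ ∈ Ioc 0 T)
    (h : |r₀ 0| < |r₀ t₀|) :
    ∃ c₀ > (0:ℝ), ∃ lam₀ > (0:ℝ), ∀ lam ≥ lam₀,
      c₀ / lam < |∫ s in (0:ℝ)..t₀, (Real.sin (Real.sqrt lam * (t₀ - s)) / Real.sqrt lam) * r₀ s| := by
  obtain ⟨ht0, ht0T⟩ := ht₀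
  have hr' : ContDiffOn ℝ 1 r₀ [[0, t₀]] := by
    rw [uIcc_of_le ht0.le]
    exact hr.mono (Icc_subset_Icc le_rfl ht0T)
  set r' := derivWithin r₀ [[0, t₀]]
  have hderiv : ∀ x ∈ [[0, t₀]], HasDerivWithinAt r₀ (r' x) [[0, t₀]] x :=
    fun x hx => (hr'.differentiableOn one_ne_zero x hx).hasDerivWithinAt
  have hint : IntervalIntegrable r' volume 0 t₀ :=
    (hr'.continuousOn_derivWithin (uniqueDiffOn_uIcc ht0.ne) le_rfl).intervalIntegrable
  set δ := |r₀ t₀| - |r₀ 0|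
  have hRL : ∀ᶠ lam in atTop, |∫ s in (0:ℝ)..t₀, r' s * cos (√lam * (t₀ - s))| < δ / 2 := by
    have := (tendsto_intervalIntegral_mul_cos_atTop ht0.le hint t₀).comp tendsto_sqrt_atTop
    simpa [Real.dist_eq] using Metric.tendsto_nhds.1 this (δ / 2) (by linarith)
  obtain ⟨lam₁, hlam₁⟩ := eventually_atTop.1 hRL
  refine ⟨δ / 2, by linarith, max lam₁ 1, by positivity, fun lam hlam_ge => ?_⟩
  have hlam : 0 < lam := one_pos.trans_le (le_of_max_le_right hlam_ge)
  have hΛ : ∫ s in (0:ℝ)..t₀, sin (√lam * (t₀ - s)) / √lam * r₀ s =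
      (√lam * ∫ s in (0:ℝ)..t₀, sin (√lam * (t₀ - s)) * r₀ s) / lam := by
    simp_rw [div_mul_eq_mul_div, intervalIntegral.integral_div]
    have hsqrt : √lam ≠ 0 := (sqrt_pos.2 hlam).ne'
    field_simp
    rw [sq_sqrt hlam.le, mul_comm]
  rw [hΛ, mul_intervalIntegral_sin_mul_eq hderiv hint, sub_zero, abs_div, abs_of_pos hlam]
  gcongr
  linarith [hlam₁ lam (le_of_max_le_left hlam_ge), abs_sub_abs_sub_abs_le_abs_sub_mul_cos_sub
    (r₀ t₀) (r₀ 0) (√lam * t₀) (∫ s in (0:ℝ)..t₀, r' s * cos (√lam * (t₀ - s)))]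

theorem stmt_0 (T : ℝ) (hT : 0 < T) (r₀ : ℝ → ℝ)
    (hr : ContDiffOn ℝ 1 r₀ (Icc 0 T))
    (t₀ : ℝ) (ht₀ : t₀ ∈ Ioc 0 T)
    (h : |r₀ 0| < |r₀ t₀|) :
    ∃ c₀ > (0:ℝ), ∃ lam₀ > (0:ℝ), ∀ lam ≥ lam₀,
      c₀ / lam < |∫ s in (0:ℝ)..t₀, (Real.sin (Real.sqrt lam * (t₀ - s)) / Real.sqrt lam) * r₀ s| :=
  stmt_0_general T r₀ hr t₀ ht₀ h
end

section
/- Let r₁ : [0,T] × ℝ → ℝ be continuous, 2π-periodic in its second variable, with zero mean in the second variable: (1/(2π)) ∫₀^{2π} r₁(t,τ) dτ = 0 for all t. Then for any continuous function g : [0,T] → ℝ and any t ∈ [0,T], ∫₀^t g(s) r₁(s, ω s) ds → 0 as ω → ∞. -/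
/-!
A primitive `F` of a continuous `c`-periodic function `f` with zero mean is itself periodic,
hence bounded, so `∫ s in a..b, f (ω * s) = (F (ω * b) - F (ω * a)) / ω = O(1 / ω)`.
For an amplitude `R s τ` that also depends on the slow variable `s`, periodicity in `τ` upgrades
joint continuity to continuity of `s ↦ R s` uniformly in `τ`. On a fine enough partition of
`[a, b]` one may therefore freeze `s` at the left end point of every cell at a cost `≤ ε (b - a)`,
and each frozen integral is `O(1 / ω)`.
-/

open Real MeasureTheory Set Filter Function Topology

namespace Function.Periodic

variable {E : Type*} [NormedAddCommGroup E] [NormedSpace ℝ E] {f : ℝ → E} {c : ℝ}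

theorem periodic_primitive_of_integral_eq_zero (hf : Periodic f c)
    (hint : ∀ a b, IntervalIntegrable f volume a b) (h0 : ∫ x in 0..c, f x = 0) :
    Periodic (fun x ↦ ∫ y in 0..x, f y) c := fun x ↦ by
  simp only [hf.intervalIntegral_add_eq_add 0 x hint, zero_add, h0, add_zero]

theorem tendsto_intervalIntegral_comp_mul_left (hf : Periodic f c) (hc : c ≠ 0)
    (hcont : Continuous f) (h0 : ∫ x in 0..c, f x = 0) (a b : ℝ) :
    Tendsto (fun ω ↦ ∫ s in a..b, f (ω * s)) atTop (𝓝 0) := by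
  have hint : ∀ a b, IntervalIntegrable f volume a b := hcont.intervalIntegrable
  set F : ℝ → E := fun x ↦ ∫ y in 0..x, f y
  obtain ⟨C, hC⟩ := ((hf.periodic_primitive_of_integral_eq_zero hint h0).isBounded_of_continuous hc
    (intervalIntegral.continuous_primitive hint 0)).exists_norm_le
  have hC' : ∀ x, ‖F x‖ ≤ C := fun x ↦ hC _ (mem_range_self x)
  refine squeeze_zero_norm' ?_ (by simpa using tendsto_inv_atTop_zero.mul_const (2 * C))
  filter_upwards [eventually_gt_atTop 0] with ω hω
  have hsub : ∫ u in ω * a..ω * b, f u = F (ω * b) - F (ω * a) :=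
    (intervalIntegral.integral_interval_sub_left (hint 0 _) (hint 0 _)).symm
  rw [intervalIntegral.integral_comp_mul_left (fun u ↦ f u) hω.ne', hsub, norm_smul, norm_inv,
    Real.norm_of_nonneg hω.le]
  gcongr
  calc ‖F (ω * b) - F (ω * a)‖ ≤ ‖F (ω * b)‖ + ‖F (ω * a)‖ := norm_sub_le _ _
    _ ≤ 2 * C := by linarith [hC' (ω * b), hC' (ω * a)]

end Function.Periodic

theorem exists_forall_dist_apply_lt_of_periodic {X E : Type*} [PseudoMetricSpace X]
    [PseudoMetricSpace E] {f : X → ℝ → E} {K : Set X} {c : ℝ} (hK : IsCompact K) (hc : 0 < c)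
    (hf : ContinuousOn (uncurry f) (K ×ˢ univ)) (hper : ∀ x ∈ K, Periodic (f x) c)
    {ε : ℝ} (hε : 0 < ε) :
    ∃ δ > 0, ∀ x ∈ K, ∀ y ∈ K, dist x y < δ → ∀ τ, dist (f x τ) (f y τ) < ε := by
  have huc := (hK.prod (isCompact_Icc (a := 0) (b := c))).uniformContinuousOn_of_continuous
    (hf.mono (prod_mono subset_rfl (subset_univ _)))
  obtain ⟨δ, hδ, hclose⟩ := Metric.uniformContinuousOn_iff.1 huc ε hε
  refine ⟨δ, hδ, fun x hx y hy hxy τ ↦ ?_⟩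
  have hperK : Periodic (fun τ (x : K) ↦ f x τ) c := fun τ ↦ funext fun x ↦ hper x x.2 τ
  obtain ⟨σ, hσ, hτσ⟩ := hperK.exists_mem_Ico₀ hc τ
  rw [show f x τ = f x σ from congrFun hτσ ⟨x, hx⟩, show f y τ = f y σ from congrFun hτσ ⟨y, hy⟩]
  exact hclose (x, σ) ⟨hx, Ico_subset_Icc_self hσ⟩ (y, σ) ⟨hy, Ico_subset_Icc_self hσ⟩
    (by simpa [Prod.dist_eq] using hxy)

theorem tendsto_zero_of_forall_approx {α E : Type*} [SeminormedAddCommGroup E] {l : Filter α}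
    {f : α → E} (h : ∀ ε > 0, ∃ g : α → E, Tendsto g l (𝓝 0) ∧ ∀ᶠ x in l, ‖f x - g x‖ ≤ ε) :
    Tendsto f l (𝓝 0) := by
  rw [Metric.tendsto_nhds]
  intro ε hε
  obtain ⟨g, hg, hfg⟩ := h (ε / 2) (half_pos hε)
  filter_upwards [Metric.tendsto_nhds.1 hg (ε / 2) (half_pos hε), hfg] with x hgx hfgx
  rw [dist_zero_right] at hgx ⊢
  calc ‖f x‖ ≤ ‖f x - g x‖ + ‖g x‖ := norm_le_norm_sub_add _ _
    _ < ε := by linarith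

theorem exists_partition_mesh_lt {a b δ : ℝ} (hab : a ≤ b) (hδ : 0 < δ) :
    ∃ (N : ℕ) (p : ℕ → ℝ), p 0 = a ∧ p N = b ∧ Monotone p ∧ ∀ i, p (i + 1) - p i < δ := by
  obtain ⟨N, hN⟩ := exists_nat_gt ((b - a) / δ)
  have hN0 : (0 : ℝ) < N := (div_nonneg (sub_nonneg.2 hab) hδ.le).trans_lt hN
  have hΔ0 : 0 ≤ (b - a) / N := div_nonneg (sub_nonneg.2 hab) hN0.le
  refine ⟨N, fun i ↦ a + i * ((b - a) / N), by simp, by field_simp; ring,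
    fun i j hij ↦ by simp only; gcongr, fun i ↦ ?_⟩
  simp only
  rwa [Nat.cast_add_one, add_mul, one_mul, add_sub_add_left_eq_sub, add_sub_cancel_left,
    div_lt_iff₀ hN0, mul_comm, ← div_lt_iff₀ hδ]

theorem norm_intervalIntegral_sub_sum_le {E : Type*} [NormedAddCommGroup E] [NormedSpace ℝ E]
    {F : ℝ → E} {G : ℕ → ℝ → E} {p : ℕ → ℝ} {N : ℕ} {η : ℝ} (hp : Monotone p)
    (hF : ∀ i < N, IntervalIntegrable F volume (p i) (p (i + 1)))
    (hG : ∀ i < N, IntervalIntegrable (G i) volume (p i) (p (i + 1)))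
    (hFG : ∀ i < N, ∀ s ∈ Ioc (p i) (p (i + 1)), ‖F s - G i s‖ ≤ η) :
    ‖(∫ s in p 0..p N, F s) - ∑ i ∈ Finset.range N, ∫ s in p i..p (i + 1), G i s‖ ≤
      η * (p N - p 0) := by
  have hpiece : ∀ i < N, ‖(∫ s in p i..p (i + 1), F s) - ∫ s in p i..p (i + 1), G i s‖ ≤
      η * (p (i + 1) - p i) := fun i hi ↦ by
    have hle : p i ≤ p (i + 1) := hp (Nat.le_succ i)
    rw [← intervalIntegral.integral_sub (hF i hi) (hG i hi), ← abs_of_nonneg (sub_nonneg.2 hle)]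
    exact intervalIntegral.norm_integral_le_of_norm_le_const fun s hs ↦
      hFG i hi s (by rwa [uIoc_of_le hle] at hs)
  rw [← intervalIntegral.sum_integral_adjacent_intervals hF, ← Finset.sum_sub_distrib,
    ← Finset.sum_range_sub p, Finset.mul_sum]
  exact (norm_sum_le _ _).trans (Finset.sum_le_sum fun i hi ↦ hpiece i (Finset.mem_range.1 hi))

theorem tendsto_intervalIntegral_apply_mul_self_of_periodic {E : Type*} [NormedAddCommGroup E]
    [NormedSpace ℝ E] {R : ℝ → ℝ → E} {a b c : ℝ} (hab : a ≤ b) (hc : 0 < c)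
    (hR : ContinuousOn (uncurry R) (Icc a b ×ˢ univ)) (hper : ∀ s ∈ Icc a b, Periodic (R s) c)
    (hmean : ∀ s ∈ Icc a b, ∫ τ in 0..c, R s τ = 0) :
    Tendsto (fun ω ↦ ∫ s in a..b, R s (ω * s)) atTop (𝓝 0) := by
  refine tendsto_zero_of_forall_approx fun ε hε ↦ ?_
  obtain ⟨δ, hδ, hclose⟩ := exists_forall_dist_apply_lt_of_periodic isCompact_Icc hc hR hper
    (div_pos hε (by linarith : 0 < b - a + 1))
  obtain ⟨N, p, hp0, hpN, hp, hmesh⟩ := exists_partition_mesh_lt hab hδ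
  have hp_mem : ∀ i ≤ N, p i ∈ Icc a b := fun i hi ↦ ⟨hp0 ▸ hp i.zero_le, hpN ▸ hp hi⟩
  have hsub : ∀ i < N, Icc (p i) (p (i + 1)) ⊆ Icc a b := fun i hi ↦
    Icc_subset_Icc (hp_mem i hi.le).1 (hp_mem _ hi).2
  have hcontR : ∀ s ∈ Icc a b, Continuous (R s) := fun s hs ↦
    hR.comp_continuous (Continuous.prodMk_right s) fun τ ↦ ⟨hs, mem_univ τ⟩
  refine ⟨fun ω ↦ ∑ i ∈ Finset.range N, ∫ s in p i..p (i + 1), R (p i) (ω * s), ?_,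
    Eventually.of_forall fun ω ↦ ?_⟩
  · simpa using tendsto_finsetSum _ fun i hi ↦
      have hpi := hp_mem i (Finset.mem_range.1 hi).le
      (hper _ hpi).tendsto_intervalIntegral_comp_mul_left hc.ne' (hcontR _ hpi) (hmean _ hpi) _ _
  have hdiag : ContinuousOn (fun s ↦ R s (ω * s)) (Icc a b) :=
    hR.comp (continuousOn_id.prodMk (continuousOn_const.mul continuousOn_id))
      fun s hs ↦ ⟨hs, mem_univ _⟩
  have hbound := norm_intervalIntegral_sub_sum_le (G := fun i s ↦ R (p i) (ω * s)) hp
    (fun i hi ↦ (hdiag.mono (hsub i hi)).intervalIntegrable_of_Icc (hp i.le_succ))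
    (fun i hi ↦ ((hcontR _ (hp_mem i hi.le)).comp (continuous_const_mul ω)).intervalIntegrable _ _)
    fun i hi s hs ↦ by
      rw [← dist_eq_norm]
      refine (hclose s (hsub i hi (Ioc_subset_Icc_self hs)) (p i) (hp_mem i hi.le) ?_ _).le
      rw [Real.dist_eq, abs_of_pos (sub_pos.2 hs.1)]
      linarith [hs.2, hmesh i]
  rw [hp0, hpN] at hbound
  refine hbound.trans ?_
  rw [div_mul_eq_mul_div, div_le_iff₀ (by linarith)]
  nlinarith

theorem stmt_3_general (T : ℝ) (r₁ : ℝ → ℝ → ℝ)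
    (hcont : Continuous fun p : ℝ × ℝ => r₁ p.1 p.2)
    (hper : ∀ t τ, r₁ t (τ + 2 * π) = r₁ t τ)
    (hmean : ∀ t, (1 / (2 * π)) * ∫ τ in (0:ℝ)..(2 * π), r₁ t τ = 0)
    (g : ℝ → ℝ) (hg : ContinuousOn g (Icc 0 T)) :
    ∀ t ∈ Icc (0:ℝ) T,
      Tendsto (fun ω : ℝ => ∫ s in (0:ℝ)..t, g s * r₁ s (ω * s)) atTop (nhds 0) := by
  intro t ht
  have hR : ContinuousOn (uncurry fun s τ ↦ g s * r₁ s τ) (Icc 0 t ×ˢ univ) :=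
    ((hg.mono (Icc_subset_Icc_right ht.2)).comp continuousOn_fst fun _ h ↦ h.1).mul
      hcont.continuousOn
  refine tendsto_intervalIntegral_apply_mul_self_of_periodic ht.1 two_pi_pos hR
    (fun s _ τ ↦ by simp only [hper]) fun s _ ↦ ?_
  rw [intervalIntegral.integral_const_mul,
    (mul_eq_zero.1 (hmean s)).resolve_left (by positivity), mul_zero]

theorem stmt_3 (T : ℝ) (hT : 0 < T) (r₁ : ℝ → ℝ → ℝ)
    (hcont : Continuous fun p : ℝ × ℝ => r₁ p.1 p.2)
    (hper : ∀ t τ, r₁ t (τ + 2 * π) = r₁ t τ)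
    (hmean : ∀ t, (1 / (2 * π)) * ∫ τ in (0:ℝ)..(2 * π), r₁ t τ = 0)
    (g : ℝ → ℝ) (hg : ContinuousOn g (Icc 0 T)) :
    ∀ t ∈ Icc (0:ℝ) T,
      Tendsto (fun ω : ℝ => ∫ s in (0:ℝ)..t, g s * r₁ s (ω * s)) atTop (nhds 0) :=
  stmt_3_general T r₁ hcont hper hmean g hg
end

section
/- Let r₁ : [0,T] × ℝ → ℝ be continuous, 2π-periodic in τ, with ⟨r₁(t,·)⟩ = 0 for each t, and uniformly continuous on [0,T] × ℝ. Then for every λ > 0, sup_{t∈[0,T]} |∫₀^t sin(√λ(t−s)) r₁(s, ωs) ds| → 0 as ω → ∞. -/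
open Real MeasureTheory Set Filter

/-!
On a short interval `[u, v]` the slow variable of `h s (ω * s)` can be frozen at `u`, at a cost
controlled by the uniform continuity of `h` on `[0, T] × [0, p]` (Heine–Cantor plus periodicity).
The frozen integral is `ω⁻¹` times an integral of a mean-zero periodic function, which is bounded
because its primitive is periodic. Cutting `[0, t]` into `N` short pieces gives the bound
`η * t + N * C / ω`, uniformly in `t ∈ [0, T]`. The kernel `sin (√λ (t - s))` is split by the
addition formula, which reduces the theorem to two such integrals with weights `cos (√λ s)` and
`sin (√λ s)`.
-/

open Function intervalIntegral

theorem Function.Periodic.abs_intervalIntegral_le_of_integral_eq_zero {f : ℝ → ℝ} {p M : ℝ}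
    (hf : Periodic f p) (hp : 0 < p) (hc : Continuous f) (hmean : ∫ x in 0..p, f x = 0)
    (hM : ∀ x, |f x| ≤ M) (a b : ℝ) : |∫ x in a..b, f x| ≤ 2 * p * M := by
  have hint : ∀ a b, IntervalIntegrable f volume a b := fun a b => hc.intervalIntegrable a b
  set F : ℝ → ℝ := fun x => ∫ u in 0..x, f u
  have hF_per : Periodic F p := fun x => by
    simp only [F, hf.intervalIntegral_add_eq_add 0 x hint, zero_add, hmean, add_zero]
  have hF_le : ∀ x, |F x| ≤ p * M := fun x => by
    obtain ⟨y, hy, hxy⟩ := hF_per.exists_mem_Ico₀ hp x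
    calc |F x| = |F y| := by rw [hxy]
      _ ≤ M * |y - 0| := norm_integral_le_of_norm_le_const (f := f) fun u _ => hM u
      _ ≤ p * M := by
        rw [sub_zero, abs_of_nonneg hy.1, mul_comm]
        exact mul_le_mul_of_nonneg_right hy.2.le ((abs_nonneg _).trans (hM 0))
  calc |∫ x in a..b, f x| = |F b - F a| := by rw [integral_interval_sub_left (hint 0 b) (hint 0 a)]
    _ ≤ |F b| + |F a| := abs_sub _ _
    _ ≤ 2 * p * M := by linarith [hF_le a, hF_le b]

theorem exists_bound_of_continuous_of_periodic {X : Type*} [TopologicalSpace X]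
    {h : X → ℝ → ℝ} {p : ℝ} (hp : 0 < p) (hcont : Continuous (uncurry h))
    (hper : ∀ x, Periodic (h x) p) {K : Set X} (hK : IsCompact K) :
    ∃ M, ∀ x ∈ K, ∀ τ, |h x τ| ≤ M := by
  obtain ⟨M, hM⟩ := (hK.prod (isCompact_Icc (a := 0) (b := p))).exists_bound_of_continuousOn
    hcont.continuousOn
  refine ⟨M, fun x hx τ => ?_⟩
  obtain ⟨y, hy, hτy⟩ := (hper x).exists_mem_Ico₀ hp τ
  rw [hτy]
  exact hM (x, y) ⟨hx, Ico_subset_Icc_self hy⟩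

theorem exists_forall_abs_sub_lt_of_continuous_of_periodic {X : Type*} [PseudoMetricSpace X]
    {h : X → ℝ → ℝ} {p : ℝ} (hp : 0 < p) (hcont : Continuous (uncurry h))
    (hper : ∀ x, Periodic (h x) p) {K : Set X} (hK : IsCompact K) {ε : ℝ} (hε : 0 < ε) :
    ∃ δ > 0, ∀ x₁ ∈ K, ∀ x₂ ∈ K, dist x₁ x₂ < δ → ∀ τ, |h x₁ τ - h x₂ τ| < ε := by
  obtain ⟨δ, hδ, hδε⟩ := Metric.uniformContinuousOn_iff.mp
    ((hK.prod (isCompact_Icc (a := 0) (b := p))).uniformContinuousOn_of_continuous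
      hcont.continuousOn) ε hε
  refine ⟨δ, hδ, fun x₁ hx₁ x₂ hx₂ hx τ => ?_⟩
  obtain ⟨y, hy, hτy⟩ := ((hper x₁).sub (hper x₂)).exists_mem_Ico₀ hp τ
  simp only [Pi.sub_apply] at hτy
  rw [hτy, ← Real.dist_eq]
  refine hδε (x₁, y) ⟨hx₁, Ico_subset_Icc_self hy⟩ (x₂, y) ⟨hx₂, Ico_subset_Icc_self hy⟩ ?_
  simpa [Prod.dist_eq] using hx

theorem abs_intervalIntegral_le_of_forall_short {f : ℝ → ℝ} (hf : Continuous f)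
    {a b η B : ℝ} {N : ℕ} (hab : a ≤ b) (hN : 0 < N)
    (hshort : ∀ u v, a ≤ u → u ≤ v → v ≤ b → v - u ≤ (b - a) / N →
      |∫ s in u..v, f s| ≤ η * (v - u) + B) :
    |∫ s in a..b, f s| ≤ η * (b - a) + N * B := by
  set P : ℕ → ℝ := fun j => a + j * ((b - a) / N)
  have hstep : ∀ j, P (j + 1) - P j = (b - a) / N := fun j => by simp only [P]; push_cast; ring
  have hP_mono : Monotone P := fun i j hij => by
    have : (i : ℝ) ≤ j := by exact_mod_cast hij
    simp only [P]; gcongr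
  have hPN : P N = b := by simp only [P]; field_simp; ring
  have hP_le : ∀ j ≤ N, P j ≤ b := fun j hj => hPN ▸ hP_mono hj
  have hP0 : P 0 = a := by simp [P]
  calc |∫ s in a..b, f s| = |∑ j ∈ Finset.range N, ∫ s in P j..P (j + 1), f s| := by
        rw [sum_integral_adjacent_intervals fun j _ => hf.intervalIntegrable _ _, hP0, hPN]
    _ ≤ ∑ j ∈ Finset.range N, (η * (P (j + 1) - P j) + B) := by
        refine (Finset.abs_sum_le_sum_abs _ _).trans (Finset.sum_le_sum fun j hj => ?_)
        rw [Finset.mem_range] at hj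
        exact hshort _ _ (hP0 ▸ hP_mono (Nat.zero_le j)) (hP_mono j.le_succ) (hP_le _ hj)
          (hstep j).le
    _ = η * (b - a) + N * B := by
        rw [Finset.sum_add_distrib, ← Finset.mul_sum, Finset.sum_range_sub (fun j => P j), hPN,
          hP0]
        simp

section Oscillation

variable {p : ℝ} {h : ℝ → ℝ → ℝ} (hp : 0 < p) (hcont : Continuous (uncurry h))
  (hper : ∀ s, Periodic (h s) p) (hmean : ∀ s, ∫ τ in 0..p, h s τ = 0)
include hp hcont hper hmean

theorem abs_integral_comp_mul_le {u v ω η M : ℝ} (huv : u ≤ v) (hω : 0 < ω)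
    (hM : ∀ τ, |h u τ| ≤ M) (hη : ∀ s ∈ Icc u v, ∀ τ, |h s τ - h u τ| ≤ η) :
    |∫ s in u..v, h s (ω * s)| ≤ η * (v - u) + 2 * p * M / ω := by
  have hcont_u : Continuous (h u) := hcont.comp (Continuous.prodMk_right u)
  have hcont_ω : Continuous fun s => h s (ω * s) := by fun_prop
  have hcont_uω : Continuous fun s => h u (ω * s) := by fun_prop
  have hfrozen : |∫ s in u..v, h u (ω * s)| ≤ 2 * p * M / ω := by
    rw [integral_comp_mul_left _ hω.ne', smul_eq_mul, abs_mul, abs_inv, abs_of_pos hω,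
      inv_mul_eq_div]
    gcongr
    exact (hper u).abs_intervalIntegral_le_of_integral_eq_zero hp hcont_u (hmean u) hM _ _
  have hdrift : |∫ s in u..v, (h s (ω * s) - h u (ω * s))| ≤ η * (v - u) := by
    have := norm_integral_le_of_norm_le_const (a := u) (b := v) (C := η)
      (f := fun s => h s (ω * s) - h u (ω * s)) fun s hs =>
        hη s (Ioc_subset_Icc_self (uIoc_of_le huv ▸ hs)) _
    rwa [abs_of_nonneg (sub_nonneg.mpr huv)] at this
  rw [integral_sub (hcont_ω.intervalIntegrable _ _) (hcont_uω.intervalIntegrable _ _)] at hdrift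
  linarith [abs_sub_abs_le_abs_sub (∫ s in u..v, h s (ω * s)) (∫ s in u..v, h u (ω * s))]

theorem tendstoUniformlyOn_integral_comp_mul (T : ℝ) :
    TendstoUniformlyOn (fun ω t => ∫ s in 0..t, h s (ω * s)) 0 atTop (Icc 0 T) := by
  rw [Metric.tendstoUniformlyOn_iff]
  intro ε hε
  obtain ⟨M, hM⟩ :=
    exists_bound_of_continuous_of_periodic hp hcont hper (isCompact_Icc (a := 0) (b := T))
  obtain ⟨η, hη, hTη⟩ := exists_pos_mul_lt (half_pos hε) T
  obtain ⟨δ, hδ, hδη⟩ :=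
    exists_forall_abs_sub_lt_of_continuous_of_periodic hp hcont hper isCompact_Icc hη
  obtain ⟨N, hN⟩ := exists_nat_gt (T / δ)
  have hsmall : Tendsto (fun ω : ℝ => N * (2 * p * M / ω)) atTop (nhds 0) := by
    simpa using (tendsto_const_nhds.div_atTop tendsto_id).const_mul (N : ℝ)
  filter_upwards [eventually_gt_atTop 0, hsmall.eventually (gt_mem_nhds (half_pos hε))]
    with ω hω hωN t ht
  rw [Pi.zero_apply, dist_zero_left, Real.norm_eq_abs]
  have hNpos : 0 < N := by exact_mod_cast (div_nonneg (ht.1.trans ht.2) hδ.le).trans_lt hN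
  have hmesh : t / N < δ := by
    rw [div_lt_iff₀ hδ] at hN
    rw [div_lt_iff₀ (by exact_mod_cast hNpos)]
    linarith [ht.2]
  have hpieces := abs_intervalIntegral_le_of_forall_short (η := η) (B := 2 * p * M / ω)
    (f := fun s => h s (ω * s)) (by fun_prop) ht.1 hNpos fun u v hu huv hvt hvu => by
      refine abs_integral_comp_mul_le hp hcont hper hmean huv hω (hM u ⟨hu, by linarith [ht.2]⟩)
        fun s hs τ => (hδη s ⟨by linarith [hs.1], by linarith [hs.2, ht.2]⟩ u
          ⟨hu, by linarith [ht.2]⟩ ?_ τ).le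
      rw [Real.dist_eq, abs_of_nonneg (by linarith [hs.1])]
      rw [sub_zero] at hvu
      linarith [hs.2]
  calc |∫ s in 0..t, h s (ω * s)| ≤ η * t + N * (2 * p * M / ω) := by simpa using hpieces
    _ ≤ T * η + N * (2 * p * M / ω) := by nlinarith [ht.2]
    _ < ε := by linarith

end Oscillation

theorem tendsto_iSup_abs_of_tendstoUniformlyOn {ι α : Type*} {l : Filter ι} {S : Set α}
    {F : ι → α → ℝ} (hF : TendstoUniformlyOn F 0 l S) :
    Tendsto (fun i => ⨆ x : S, |F i x|) l (nhds 0) := by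
  rw [Metric.tendsto_nhds]
  intro ε hε
  filter_upwards [Metric.tendstoUniformlyOn_iff.mp hF (ε / 2) (half_pos hε)] with i hi
  have hsup_le : ⨆ x : S, |F i x| ≤ ε / 2 := Real.iSup_le
    (fun x => by simpa using (hi x x.2).le) (half_pos hε).le
  rw [Real.dist_0_eq_abs, abs_of_nonneg (Real.iSup_nonneg fun x => abs_nonneg _)]
  linarith

theorem integral_sin_mul_sub_mul (c t a b : ℝ) {f : ℝ → ℝ}
    (hf : IntervalIntegrable f volume a b) :
    ∫ s in a..b, sin (c * (t - s)) * f s =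
      sin (c * t) * (∫ s in a..b, cos (c * s) * f s) -
        cos (c * t) * ∫ s in a..b, sin (c * s) * f s := by
  rw [← intervalIntegral.integral_const_mul, ← intervalIntegral.integral_const_mul,
    ← intervalIntegral.integral_sub]
  · congr 1 with s
    rw [mul_sub, sin_sub]
    ring
  · exact (hf.continuousOn_mul (by fun_prop)).const_mul _
  · exact (hf.continuousOn_mul (by fun_prop)).const_mul _

theorem abs_sin_mul_sub_cos_mul_le (x a b : ℝ) : |sin x * a - cos x * b| ≤ |a| + |b| :=
  calc |sin x * a - cos x * b| ≤ |sin x| * |a| + |cos x| * |b| := by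
        rw [← abs_mul, ← abs_mul]; exact abs_sub _ _
    _ ≤ |a| + |b| := by
        gcongr
        · exact mul_le_of_le_one_left (abs_nonneg _) (abs_sin_le_one x)
        · exact mul_le_of_le_one_left (abs_nonneg _) (abs_cos_le_one x)

theorem stmt_15_general (T : ℝ) (r₁ : ℝ → ℝ → ℝ)
    (hcont : Continuous fun p : ℝ × ℝ => r₁ p.1 p.2)
    (hper : ∀ t τ, r₁ t (τ + 2 * π) = r₁ t τ)
    (hmean : ∀ t, (1 / (2 * π)) * ∫ τ in (0:ℝ)..(2 * π), r₁ t τ = 0)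
    (lam : ℝ) :
    Tendsto (fun ω : ℝ => ⨆ t : Icc (0:ℝ) T,
        |∫ s in (0:ℝ)..(t:ℝ), Real.sin (Real.sqrt lam * ((t:ℝ) - s)) * r₁ s (ω * s)|)
      atTop (nhds 0) := by
  set c := √lam
  have hmean₀ : ∀ t, ∫ τ in (0:ℝ)..(2 * π), r₁ t τ = 0 := fun t =>
    (mul_eq_zero.mp (hmean t)).resolve_left (by positivity)
  have hweighted : ∀ a : ℝ → ℝ, Continuous a →
      TendstoUniformlyOn (fun ω t => ∫ s in 0..t, a s * r₁ s (ω * s)) 0 atTop (Icc 0 T) :=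
    fun a ha => tendstoUniformlyOn_integral_comp_mul (h := fun s τ => a s * r₁ s τ) two_pi_pos
      ((ha.comp continuous_fst).mul hcont) (fun s τ => by simp only [hper])
      (fun s => by simp [intervalIntegral.integral_const_mul, hmean₀]) T
  have hcos := Metric.tendstoUniformlyOn_iff.mp (hweighted (fun s => cos (c * s)) (by fun_prop))
  have hsin := Metric.tendstoUniformlyOn_iff.mp (hweighted (fun s => sin (c * s)) (by fun_prop))
  refine tendsto_iSup_abs_of_tendstoUniformlyOn
    (F := fun ω t => ∫ s in 0..t, sin (c * (t - s)) * r₁ s (ω * s))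
    (Metric.tendstoUniformlyOn_iff.mpr fun ε hε => ?_)
  filter_upwards [hcos (ε / 2) (half_pos hε), hsin (ε / 2) (half_pos hε)]
    with ω hcosω hsinω t ht
  specialize hcosω t ht
  specialize hsinω t ht
  simp only [Pi.zero_apply, dist_zero_left, Real.norm_eq_abs] at hcosω hsinω ⊢
  rw [integral_sin_mul_sub_mul (f := fun s => r₁ s (ω * s)) _ _ _ _
    ((hcont.comp (continuous_id.prodMk (continuous_const_mul ω))).intervalIntegrable _ _)]
  linarith [abs_sin_mul_sub_cos_mul_le (c * t) (∫ s in 0..t, cos (c * s) * r₁ s (ω * s))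
    (∫ s in 0..t, sin (c * s) * r₁ s (ω * s))]

theorem stmt_15 (T : ℝ) (hT : 0 < T) (r₁ : ℝ → ℝ → ℝ)
    (hcont : Continuous fun p : ℝ × ℝ => r₁ p.1 p.2)
    (hper : ∀ t τ, r₁ t (τ + 2 * π) = r₁ t τ)
    (hmean : ∀ t, (1 / (2 * π)) * ∫ τ in (0:ℝ)..(2 * π), r₁ t τ = 0)
    (hucont : ∀ ε > (0:ℝ), ∃ δ > (0:ℝ), ∀ t₁ t₂ τ₁ τ₂ : ℝ,
      t₁ ∈ Icc (0:ℝ) T → t₂ ∈ Icc (0:ℝ) T → |t₁ - t₂| < δ → |τ₁ - τ₂| < δ →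
      |r₁ t₁ τ₁ - r₁ t₂ τ₂| < ε)
    (lam : ℝ) (hlam : 0 < lam) :
    Tendsto (fun ω : ℝ => ⨆ t : Icc (0:ℝ) T,
        |∫ s in (0:ℝ)..(t:ℝ), Real.sin (Real.sqrt lam * ((t:ℝ) - s)) * r₁ s (ω * s)|)
      atTop (nhds 0) :=
  stmt_15_general T r₁ hcont hper hmean lam
end
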